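/- arXiv:2505.21272 — 7 statements merged into one kernel-verified Lean document; each statement's English description precedes it below -/
import Mathlib

section
/- Let D be a non-trivial (v,b,r,k,1)-BIBD (i.e. λ = 1). Then any two distinct non-adjacent vertices of the flag-graph Γ₁(D) have at most one common neighbour. -/
/-- A `(v,b,r,k,lam)`-balanced incomplete block design: a finite set of `v` points and a
family of `b` distinct blocks, each block a `k`-element subset of the points with
`1 < k < v`, such that every point lies in exactly `r` blocks and every pair of distinct
points is contained in exactly `lam` blocks (all parameters positive). -/
structure BIBD (v b r k lam : ℕ) where
  P : Type
  [fintypeP : Fintype P]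
  [decEqP : DecidableEq P]
  blocks : Finset (Finset P)
  card_points : Fintype.card P = v
  card_blocks : blocks.card = b
  block_size : ∀ c ∈ blocks, c.card = k
  one_lt_k : 1 < k
  k_lt_v : k < v
  lam_pos : 0 < lam
  point_deg : ∀ p : P, (blocks.filter (fun c => p ∈ c)).card = r
  pair_deg : ∀ p q : P, p ≠ q → (blocks.filter (fun c => p ∈ c ∧ q ∈ c)).card = lam

attribute [instance] BIBD.fintypeP BIBD.decEqP

variable {v b r k lam : ℕ}

/-- A flag of a BIBD: an incident point-block pair `(p, c)` with `p ∈ c`. -/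
def BIBD.Flag (D : BIBD v b r k lam) : Type :=
  {pc : D.P × Finset D.P // pc.2 ∈ D.blocks ∧ pc.1 ∈ pc.2}

instance (D : BIBD v b r k lam) : Fintype D.Flag :=
  inferInstanceAs (Fintype {pc : D.P × Finset D.P // pc.2 ∈ D.blocks ∧ pc.1 ∈ pc.2})

instance (D : BIBD v b r k lam) : DecidableEq D.Flag :=
  inferInstanceAs (DecidableEq {pc : D.P × Finset D.P // pc.2 ∈ D.blocks ∧ pc.1 ∈ pc.2})

/-- The flag-graph `Γ₁(D)`: vertices are the flags of `D`; two distinct flags `(p,c)` and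
`(q,d)` are adjacent iff `p = q` or `c = d`. -/
def BIBD.Gamma1 (D : BIBD v b r k lam) : SimpleGraph D.Flag where
  Adj x y := x ≠ y ∧ (x.1.1 = y.1.1 ∨ x.1.2 = y.1.2)
  symm := ⟨fun _ _ h => ⟨h.1.symm, h.2.imp Eq.symm Eq.symm⟩⟩
  loopless := ⟨fun _ h => h.1 rfl⟩

instance (D : BIBD v b r k lam) : DecidableRel D.Gamma1.Adj :=
  fun x y => inferInstanceAs (Decidable (x ≠ y ∧ (x.1.1 = y.1.1 ∨ x.1.2 = y.1.2)))

namespace BIBD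

theorem block_eq_of_mem_of_mem (D : BIBD v b r k 1) {p q : D.P} (hpq : p ≠ q)
    {c d : Finset D.P} (hc : c ∈ D.blocks) (hd : d ∈ D.blocks)
    (hpc : p ∈ c) (hqc : q ∈ c) (hpd : p ∈ d) (hqd : q ∈ d) : c = d :=
  Finset.card_le_one.mp (D.pair_deg p q hpq).le c (by simp [hc, hpc, hqc])
    d (by simp [hd, hpd, hqd])

namespace Flag

variable {D : BIBD v b r k lam}

theorem mem_of_val_eq {u : D.Flag} {p : D.P} {c : Finset D.P} (h : u.1 = (p, c)) :
    p ∈ c := by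
  simpa [h] using u.2.2

end Flag

theorem fst_ne_and_snd_ne_of_not_adj (D : BIBD v b r k lam) {x y : D.Flag} (hne : x ≠ y)
    (h : ¬ D.Gamma1.Adj x y) : x.1.1 ≠ y.1.1 ∧ x.1.2 ≠ y.1.2 := by
  simpa [Gamma1, hne, not_or] using h

theorem val_eq_or_of_adj_of_adj (D : BIBD v b r k lam) {x y u : D.Flag}
    (hp : x.1.1 ≠ y.1.1) (hc : x.1.2 ≠ y.1.2) (hxu : D.Gamma1.Adj x u)
    (hyu : D.Gamma1.Adj y u) : u.1 = (x.1.1, y.1.2) ∨ u.1 = (y.1.1, x.1.2) := by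
  rcases hxu.2 with hx | hx <;> rcases hyu.2 with hy | hy
  · exact absurd (hx.trans hy.symm) hp
  · exact Or.inl (Prod.ext hx.symm hy.symm)
  · exact Or.inr (Prod.ext hy.symm hx.symm)
  · exact absurd (hx.trans hy.symm) hc

end BIBD

theorem flagGraph_nonadjacent_common_neighbours_lambda_one_general (D : BIBD v b r k 1)
    (x y : D.Flag) (hne : x ≠ y) (hnadj : ¬ D.Gamma1.Adj x y) :
    (D.Gamma1.neighborFinset x ∩ D.Gamma1.neighborFinset y).card ≤ 1 := by
  obtain ⟨hp, hc⟩ := D.fst_ne_and_snd_ne_of_not_adj hne hnadj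
  -- With `x = (p, c)` and `y = (q, d)`, the flags `(p, d)` and `(q, c)` cannot both exist:
  -- `p` and `q` would then lie in both `c` and `d`, against `λ = 1`.
  have not_both {u w : D.Flag} (hu : u.1 = (x.1.1, y.1.2)) (hw : w.1 = (y.1.1, x.1.2)) : False :=
    hc <| D.block_eq_of_mem_of_mem hp x.2.1 y.2.1 x.2.2 (BIBD.Flag.mem_of_val_eq hw)
      (BIBD.Flag.mem_of_val_eq hu) y.2.2
  refine Finset.card_le_one.mpr fun u hu w hw => ?_
  simp only [Finset.mem_inter, SimpleGraph.mem_neighborFinset] at hu hw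
  rcases D.val_eq_or_of_adj_of_adj hp hc hu.1 hu.2 with hu | hu <;>
    rcases D.val_eq_or_of_adj_of_adj hp hc hw.1 hw.2 with hw | hw
  · exact Subtype.ext (hu.trans hw.symm)
  · exact (not_both hu hw).elim
  · exact (not_both hw hu).elim
  · exact Subtype.ext (hu.trans hw.symm)

/-- In the flag-graph of a non-trivial BIBD with `λ = 1`, any two distinct non-adjacent
vertices have at most one common neighbour. -/
theorem flagGraph_nonadjacent_common_neighbours_lambda_one (D : BIBD v b r k 1)
    (hnt : 1 < v - k) (x y : D.Flag) (hne : x ≠ y) (hnadj : ¬ D.Gamma1.Adj x y) :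
    (D.Gamma1.neighborFinset x ∩ D.Gamma1.neighborFinset y).card ≤ 1 :=
  flagGraph_nonadjacent_common_neighbours_lambda_one_general D x y hne hnadj
end

section
/- Let D be a non-trivial (v,b,r,k,λ)-BIBD. Then in the flag-graph Γ₁(D) there exist two distinct non-adjacent vertices with no common neighbour, and there exist two distinct non-adjacent vertices with exactly one common neighbour. Moreover, if λ ≥ 2, then there exist two distinct non-adjacent vertices with exactly two common neighbours. -/
variable {v b r k lam : ℕ}

/-! Two flags `(p, c)`, `(q, d)` with `p ≠ q` and `c ≠ d` are non-adjacent, and their common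
neighbours are those of `(p, d)`, `(q, c)` that are flags. So it suffices to find such pairs
with neither, exactly one, or both of `p ∈ d`, `q ∈ c`. Two distinct blocks `c`, `d` through a
common point `p₀` give the first two cases, with `p ∈ c \ d` paired with a point of `d \ c`,
respectively with `p₀`; two distinct blocks through the same pair of points give the third. -/

namespace BIBD

variable (D : BIBD v b r k lam)

open Finset

section Design

lemma exists_ne_points : ∃ p q : D.P, p ≠ q :=
  Fintype.exists_pair_of_one_lt_card <| by
    rw [D.card_points]
    linarith [D.one_lt_k, D.k_lt_v]

lemma exists_block_of_ne {p q : D.P} (hpq : p ≠ q) : ∃ c ∈ D.blocks, p ∈ c ∧ q ∈ c := by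
  obtain ⟨c, hc⟩ := card_pos.mp (D.pair_deg p q hpq ▸ D.lam_pos)
  exact ⟨c, (mem_filter.mp hc).1, (mem_filter.mp hc).2⟩

lemma exists_two_blocks_of_ne {p q : D.P} (hpq : p ≠ q) (hlam : 2 ≤ lam) :
    ∃ c ∈ D.blocks, ∃ d ∈ D.blocks, c ≠ d ∧ (p ∈ c ∧ q ∈ c) ∧ (p ∈ d ∧ q ∈ d) := by
  obtain ⟨c, hc, d, hd, hcd⟩ := one_lt_card.mp (D.pair_deg p q hpq ▸ hlam)
  rw [mem_filter] at hc hd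
  exact ⟨c, hc.1, d, hd.1, hcd, hc.2, hd.2⟩

lemma exists_notMem_of_mem_blocks {c : Finset D.P} (hc : c ∈ D.blocks) : ∃ s, s ∉ c := by
  obtain ⟨s, -, hs⟩ := exists_mem_notMem_of_card_lt_card (s := c) (t := univ) <| by
    rw [D.block_size c hc, card_univ, D.card_points]
    exact D.k_lt_v
  exact ⟨s, hs⟩

lemma exists_mem_notMem_of_ne {c d : Finset D.P} (hc : c ∈ D.blocks) (hd : d ∈ D.blocks)
    (hcd : c ≠ d) : ∃ p ∈ c, p ∉ d :=
  not_subset.mp fun h => hcd <| eq_of_subset_of_card_le h <| by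
    rw [D.block_size c hc, D.block_size d hd]

end Design

section FlagGraph

variable {D}

lemma mem_gamma1_common_neighbours_iff {x y z : D.Flag} (hp : x.1.1 ≠ y.1.1)
    (hc : x.1.2 ≠ y.1.2) :
    z ∈ D.Gamma1.neighborFinset x ∩ D.Gamma1.neighborFinset y ↔
      z.1 = (x.1.1, y.1.2) ∨ z.1 = (y.1.1, x.1.2) := by
  simp only [mem_inter, SimpleGraph.mem_neighborFinset]
  simp only [Gamma1, ne_eq, Prod.ext_iff]
  grind

lemma card_gamma1_common_neighbours {x y : D.Flag} (hp : x.1.1 ≠ y.1.1) (hc : x.1.2 ≠ y.1.2) :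
    #(D.Gamma1.neighborFinset x ∩ D.Gamma1.neighborFinset y) =
      #{pc ∈ {(x.1.1, y.1.2), (y.1.1, x.1.2)} | pc.2 ∈ D.blocks ∧ pc.1 ∈ pc.2} := by
  refine card_bij (fun z _ => z.1) (fun z hz => ?_) (fun _ _ _ _ => Subtype.ext) fun pc hpc => ?_
  · rw [mem_gamma1_common_neighbours_iff hp hc] at hz
    simpa only [mem_filter, mem_insert, mem_singleton] using ⟨hz, z.2⟩
  · rw [mem_filter, mem_insert, mem_singleton] at hpc
    exact ⟨⟨pc, hpc.2⟩, (mem_gamma1_common_neighbours_iff hp hc).mpr hpc.1, rfl⟩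

lemma exists_gamma1_nonadj_card_common_neighbours_eq (x y : D.Flag) (hp : x.1.1 ≠ y.1.1)
    (hc : x.1.2 ≠ y.1.2) {n : ℕ}
    (hn : #{pc ∈ {(x.1.1, y.1.2), (y.1.1, x.1.2)} | pc.2 ∈ D.blocks ∧ pc.1 ∈ pc.2} = n) :
    ∃ x y : D.Flag, x ≠ y ∧ ¬ D.Gamma1.Adj x y ∧
      #(D.Gamma1.neighborFinset x ∩ D.Gamma1.neighborFinset y) = n :=
  ⟨x, y, ne_of_apply_ne (fun z : D.Flag => z.1.1) hp, fun h => h.2.elim hp hc,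
    (card_gamma1_common_neighbours hp hc).trans hn⟩

end FlagGraph

end BIBD

theorem flagGraph_nonadjacent_common_neighbours_exist_general (D : BIBD v b r k lam) :
    (∃ x y : D.Flag, x ≠ y ∧ ¬ D.Gamma1.Adj x y ∧
      (D.Gamma1.neighborFinset x ∩ D.Gamma1.neighborFinset y).card = 0) ∧
    (∃ x y : D.Flag, x ≠ y ∧ ¬ D.Gamma1.Adj x y ∧
      (D.Gamma1.neighborFinset x ∩ D.Gamma1.neighborFinset y).card = 1) ∧
    (2 ≤ lam → ∃ x y : D.Flag, x ≠ y ∧ ¬ D.Gamma1.Adj x y ∧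
      (D.Gamma1.neighborFinset x ∩ D.Gamma1.neighborFinset y).card = 2) := by
  obtain ⟨p₀, q₀, hpq₀⟩ := D.exists_ne_points
  obtain ⟨c, hc, hp₀c, -⟩ := D.exists_block_of_ne hpq₀
  obtain ⟨s, hsc⟩ := D.exists_notMem_of_mem_blocks hc
  obtain ⟨d, hd, hp₀d, hsd⟩ := D.exists_block_of_ne (ne_of_mem_of_not_mem hp₀c hsc)
  have hcd : c ≠ d := (ne_of_mem_of_not_mem' hsd hsc).symm
  obtain ⟨p, hpc, hpd⟩ := D.exists_mem_notMem_of_ne hc hd hcd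
  refine ⟨?_, ?_, fun hlam => ?_⟩
  · exact BIBD.exists_gamma1_nonadj_card_common_neighbours_eq ⟨(p, c), hc, hpc⟩
      ⟨(s, d), hd, hsd⟩ (ne_of_mem_of_not_mem hpc hsc) hcd (by simp [hpd, hsc])
  · exact BIBD.exists_gamma1_nonadj_card_common_neighbours_eq ⟨(p, c), hc, hpc⟩
      ⟨(p₀, d), hd, hp₀d⟩ (ne_of_mem_of_not_mem hp₀d hpd).symm hcd
      (by simp [Finset.filter_insert, Finset.filter_singleton, hpd, hc, hp₀c])
  · obtain ⟨c', hc', d', hd', hcd', ⟨hp₀c', hq₀c'⟩, hp₀d', hq₀d'⟩ :=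
      D.exists_two_blocks_of_ne hpq₀ hlam
    exact BIBD.exists_gamma1_nonadj_card_common_neighbours_eq ⟨(p₀, c'), hc', hp₀c'⟩
      ⟨(q₀, d'), hd', hq₀d'⟩ hpq₀ hcd'
      (by simp [Finset.filter_insert, Finset.filter_singleton, hpq₀, hc', hd', hp₀d', hq₀c'])

/-- In the flag-graph of a non-trivial BIBD there are distinct non-adjacent vertices with
no common neighbour, and distinct non-adjacent vertices with exactly one common neighbour;
if `λ ≥ 2` there are also distinct non-adjacent vertices with exactly two common
neighbours. -/
theorem flagGraph_nonadjacent_common_neighbours_exist (D : BIBD v b r k lam)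
    (hnt : 1 < v - k) :
    (∃ x y : D.Flag, x ≠ y ∧ ¬ D.Gamma1.Adj x y ∧
      (D.Gamma1.neighborFinset x ∩ D.Gamma1.neighborFinset y).card = 0) ∧
    (∃ x y : D.Flag, x ≠ y ∧ ¬ D.Gamma1.Adj x y ∧
      (D.Gamma1.neighborFinset x ∩ D.Gamma1.neighborFinset y).card = 1) ∧
    (2 ≤ lam → ∃ x y : D.Flag, x ≠ y ∧ ¬ D.Gamma1.Adj x y ∧
      (D.Gamma1.neighborFinset x ∩ D.Gamma1.neighborFinset y).card = 2) :=
  flagGraph_nonadjacent_common_neighbours_exist_general D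
end

section
/- Let D be a non-trivial (v,k,λ)-symmetric design. Then the flag-graph Γ₁(D) has exactly v·k vertices, is 2(k−1)-regular, any two adjacent vertices have exactly k−2 common neighbours, and any two distinct non-adjacent vertices have at most two common neighbours; if moreover λ = 1, any two distinct non-adjacent vertices have at most one common neighbour. -/
variable {v b r k lam : ℕ}

/-!
A neighbour of the flag `(p, c)` shares its point or its block, so the neighbourhood consists of
the `r - 1` other flags through `p` and the `k - 1` other flags on `c`; for a symmetric design
`r = k`. Two flags through the same point have as common neighbours exactly the remaining flags
through that point, and dually for two flags on the same block. Two flags `(p, c)`, `(q, d)` with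
`p ≠ q` and `c ≠ d` can only have `(p, d)` and `(q, c)` as common neighbours, and both are flags
only if `c` and `d` are two blocks through `p` and `q`, which `λ = 1` forbids.
-/

open Finset

namespace BIBD

variable (D : BIBD v b r k lam)

theorem flag_ext {x y : D.Flag} (hp : x.1.1 = y.1.1) (hc : x.1.2 = y.1.2) : x = y :=
  Subtype.ext (Prod.ext hp hc)

def flagsAt (p : D.P) : Finset D.Flag := {x | x.1.1 = p}

def flagsOn (c : Finset D.P) : Finset D.Flag := {x | x.1.2 = c}

variable {D}

@[simp]
theorem mem_flagsAt {x : D.Flag} {p : D.P} : x ∈ D.flagsAt p ↔ x.1.1 = p :=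
  mem_filter.trans (and_iff_right (mem_univ x))

@[simp]
theorem mem_flagsOn {x : D.Flag} {c : Finset D.P} : x ∈ D.flagsOn c ↔ x.1.2 = c :=
  mem_filter.trans (and_iff_right (mem_univ x))

theorem gamma1_adj {x y : D.Flag} :
    D.Gamma1.Adj x y ↔ x ≠ y ∧ (x.1.1 = y.1.1 ∨ x.1.2 = y.1.2) :=
  Iff.rfl

variable (D)

theorem card_flagsAt (p : D.P) : #(D.flagsAt p) = r := by
  refine (card_bij (fun x _ => x.1.2) ?_ ?_ ?_).trans (D.point_deg p)
  · intro x hx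
    exact mem_filter.2 ⟨x.2.1, mem_flagsAt.1 hx ▸ x.2.2⟩
  · intro x hx y hy h
    exact D.flag_ext ((mem_flagsAt.1 hx).trans (mem_flagsAt.1 hy).symm) h
  · intro c hc
    obtain ⟨hcB, hpc⟩ := mem_filter.1 hc
    exact ⟨⟨(p, c), hcB, hpc⟩, mem_flagsAt.2 rfl, rfl⟩

theorem card_flagsOn {c : Finset D.P} (hc : c ∈ D.blocks) : #(D.flagsOn c) = k := by
  refine (card_bij (fun x _ => x.1.1) ?_ ?_ ?_).trans (D.block_size c hc)
  · intro x hx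
    exact mem_flagsOn.1 hx ▸ x.2.2
  · intro x hx y hy h
    exact D.flag_ext h ((mem_flagsOn.1 hx).trans (mem_flagsOn.1 hy).symm)
  · intro p hp
    exact ⟨⟨(p, c), hc, hp⟩, mem_flagsOn.2 rfl, rfl⟩

theorem card_flag : Fintype.card D.Flag = v * r := by
  calc Fintype.card D.Flag = ∑ p, #(D.flagsAt p) :=
        card_eq_sum_card_fiberwise fun _ _ => mem_coe.2 (mem_univ _)
    _ = v * r := by simp only [card_flagsAt, sum_const, card_univ, D.card_points, smul_eq_mul]

theorem flagsAt_inter_flagsOn (x : D.Flag) : D.flagsAt x.1.1 ∩ D.flagsOn x.1.2 = {x} := by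
  ext z
  simp only [mem_inter, mem_flagsAt, mem_flagsOn, mem_singleton]
  exact ⟨fun h => D.flag_ext h.1 h.2, fun h => h ▸ ⟨rfl, rfl⟩⟩

theorem card_flagsAt_inter_flagsOn_le_one (p : D.P) (c : Finset D.P) :
    #(D.flagsAt p ∩ D.flagsOn c) ≤ 1 :=
  card_le_one.2 fun x hx y hy => by
    simp only [mem_inter, mem_flagsAt, mem_flagsOn] at hx hy
    exact D.flag_ext (hx.1.trans hy.1.symm) (hx.2.trans hy.2.symm)

theorem neighborFinset_eq (x : D.Flag) :
    D.Gamma1.neighborFinset x = (D.flagsAt x.1.1 ∪ D.flagsOn x.1.2).erase x := by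
  ext z
  rw [SimpleGraph.mem_neighborFinset, gamma1_adj, mem_erase, mem_union, mem_flagsAt, mem_flagsOn]
  grind

theorem degree_eq (x : D.Flag) : D.Gamma1.degree x = r + k - 2 := by
  have h := card_union_add_card_inter (D.flagsAt x.1.1) (D.flagsOn x.1.2)
  rw [flagsAt_inter_flagsOn, card_flagsAt, card_flagsOn D x.2.1, card_singleton] at h
  rw [← SimpleGraph.card_neighborFinset_eq_degree, neighborFinset_eq,
    card_erase_of_mem (mem_union_left _ (mem_flagsAt.2 rfl))]
  omega

theorem card_neighborFinset_inter_of_point_eq {x y : D.Flag} (hxy : x ≠ y)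
    (hp : x.1.1 = y.1.1) :
    #(D.Gamma1.neighborFinset x ∩ D.Gamma1.neighborFinset y) = r - 2 := by
  have hc : x.1.2 ≠ y.1.2 := fun hc => hxy (D.flag_ext hp hc)
  have h : D.Gamma1.neighborFinset x ∩ D.Gamma1.neighborFinset y =
      ((D.flagsAt x.1.1).erase x).erase y := by
    ext z
    simp only [mem_inter, neighborFinset_eq, mem_erase, mem_union, mem_flagsAt, mem_flagsOn]
    grind
  rw [h, card_erase_of_mem (by simp [hxy.symm, hp]), card_erase_of_mem (by simp),
    card_flagsAt, Nat.sub_sub]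

theorem card_neighborFinset_inter_of_block_eq {x y : D.Flag} (hxy : x ≠ y)
    (hc : x.1.2 = y.1.2) :
    #(D.Gamma1.neighborFinset x ∩ D.Gamma1.neighborFinset y) = k - 2 := by
  have hp : x.1.1 ≠ y.1.1 := fun hp => hxy (D.flag_ext hp hc)
  have h : D.Gamma1.neighborFinset x ∩ D.Gamma1.neighborFinset y =
      ((D.flagsOn x.1.2).erase x).erase y := by
    ext z
    simp only [mem_inter, neighborFinset_eq, mem_erase, mem_union, mem_flagsAt, mem_flagsOn]
    grind
  rw [h, card_erase_of_mem (by simp [hxy.symm, hc]), card_erase_of_mem (by simp),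
    card_flagsOn D x.2.1, Nat.sub_sub]

theorem neighborFinset_inter_subset {x y : D.Flag} (hp : x.1.1 ≠ y.1.1) (hc : x.1.2 ≠ y.1.2) :
    D.Gamma1.neighborFinset x ∩ D.Gamma1.neighborFinset y ⊆
      D.flagsAt x.1.1 ∩ D.flagsOn y.1.2 ∪ D.flagsAt y.1.1 ∩ D.flagsOn x.1.2 := by
  intro z
  simp only [mem_inter, neighborFinset_eq, mem_erase, mem_union, mem_flagsAt, mem_flagsOn]
  grind

theorem point_ne_and_block_ne_of_not_adj {x y : D.Flag} (hxy : x ≠ y)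
    (h : ¬ D.Gamma1.Adj x y) : x.1.1 ≠ y.1.1 ∧ x.1.2 ≠ y.1.2 :=
  not_or.1 fun h' => h ⟨hxy, h'⟩

theorem card_neighborFinset_inter_le_two {x y : D.Flag} (hxy : x ≠ y) (h : ¬ D.Gamma1.Adj x y) :
    #(D.Gamma1.neighborFinset x ∩ D.Gamma1.neighborFinset y) ≤ 2 := by
  obtain ⟨hp, hc⟩ := D.point_ne_and_block_ne_of_not_adj hxy h
  calc _ ≤ #(D.flagsAt x.1.1 ∩ D.flagsOn y.1.2 ∪ D.flagsAt y.1.1 ∩ D.flagsOn x.1.2) :=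
        card_le_card (D.neighborFinset_inter_subset hp hc)
    _ ≤ 1 + 1 := (card_union_le _ _).trans (add_le_add (D.card_flagsAt_inter_flagsOn_le_one _ _)
        (D.card_flagsAt_inter_flagsOn_le_one _ _))

theorem block_eq_of_lam_eq_one (hlam : lam = 1) {p q : D.P} (hpq : p ≠ q) {c d : Finset D.P}
    (hc : c ∈ D.blocks) (hd : d ∈ D.blocks) (hpc : p ∈ c) (hqc : q ∈ c) (hpd : p ∈ d)
    (hqd : q ∈ d) : c = d :=
  card_le_one.1 (D.pair_deg p q hpq ▸ hlam.le) c (mem_filter.2 ⟨hc, hpc, hqc⟩) d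
    (mem_filter.2 ⟨hd, hpd, hqd⟩)

theorem card_neighborFinset_inter_le_one_of_lam_eq_one (hlam : lam = 1) {x y : D.Flag}
    (hxy : x ≠ y) (h : ¬ D.Gamma1.Adj x y) :
    #(D.Gamma1.neighborFinset x ∩ D.Gamma1.neighborFinset y) ≤ 1 := by
  obtain ⟨hp, hc⟩ := D.point_ne_and_block_ne_of_not_adj hxy h
  have hsub := D.neighborFinset_inter_subset hp hc
  rcases (D.flagsAt x.1.1 ∩ D.flagsOn y.1.2).eq_empty_or_nonempty with hA | ⟨z, hz⟩
  · rw [hA, empty_union] at hsub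
    exact (card_le_card hsub).trans (D.card_flagsAt_inter_flagsOn_le_one _ _)
  have hB : D.flagsAt y.1.1 ∩ D.flagsOn x.1.2 = ∅ := by
    refine eq_empty_of_forall_notMem fun w hw => hc ?_
    simp only [mem_inter, mem_flagsAt, mem_flagsOn] at hz hw
    exact D.block_eq_of_lam_eq_one hlam hp x.2.1 y.2.1 x.2.2 (hw.2 ▸ hw.1 ▸ w.2.2)
      (hz.2 ▸ hz.1 ▸ z.2.2) y.2.2
  rw [hB, union_empty] at hsub
  exact (card_le_card hsub).trans (D.card_flagsAt_inter_flagsOn_le_one _ _)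

end BIBD

theorem flagGraph_symmetric_design_qsrg_general (D : BIBD v v k k lam) :
    Fintype.card D.Flag = v * k ∧
    (∀ x : D.Flag, D.Gamma1.degree x = 2 * (k - 1)) ∧
    (∀ x y : D.Flag, D.Gamma1.Adj x y →
      (D.Gamma1.neighborFinset x ∩ D.Gamma1.neighborFinset y).card = k - 2) ∧
    (∀ x y : D.Flag, x ≠ y → ¬ D.Gamma1.Adj x y →
      (D.Gamma1.neighborFinset x ∩ D.Gamma1.neighborFinset y).card ≤ 2) ∧
    (lam = 1 → ∀ x y : D.Flag, x ≠ y → ¬ D.Gamma1.Adj x y →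
      (D.Gamma1.neighborFinset x ∩ D.Gamma1.neighborFinset y).card ≤ 1) := by
  refine ⟨D.card_flag, fun x => ?_, fun x y hxy => ?_,
    fun _ _ => D.card_neighborFinset_inter_le_two,
    fun hlam _ _ => D.card_neighborFinset_inter_le_one_of_lam_eq_one hlam⟩
  · rw [D.degree_eq]
    omega
  · obtain ⟨hne, hp | hc⟩ := BIBD.gamma1_adj.1 hxy
    exacts [D.card_neighborFinset_inter_of_point_eq hne hp,
      D.card_neighborFinset_inter_of_block_eq hne hc]

/-- For a non-trivial `(v,k,λ)`-symmetric design `D`, the flag-graph `Γ₁(D)` has `v·k`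
vertices, is `2(k-1)`-regular, adjacent vertices have exactly `k-2` common neighbours,
distinct non-adjacent vertices have at most two common neighbours, and if `λ = 1` then
distinct non-adjacent vertices have at most one common neighbour. -/
theorem flagGraph_symmetric_design_qsrg (D : BIBD v v k k lam) (hnt : 1 < v - k) :
    Fintype.card D.Flag = v * k ∧
    (∀ x : D.Flag, D.Gamma1.degree x = 2 * (k - 1)) ∧
    (∀ x y : D.Flag, D.Gamma1.Adj x y →
      (D.Gamma1.neighborFinset x ∩ D.Gamma1.neighborFinset y).card = k - 2) ∧
    (∀ x y : D.Flag, x ≠ y → ¬ D.Gamma1.Adj x y →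
      (D.Gamma1.neighborFinset x ∩ D.Gamma1.neighborFinset y).card ≤ 2) ∧
    (lam = 1 → ∀ x y : D.Flag, x ≠ y → ¬ D.Gamma1.Adj x y →
      (D.Gamma1.neighborFinset x ∩ D.Gamma1.neighborFinset y).card ≤ 1) :=
  flagGraph_symmetric_design_qsrg_general D
end

section
/- Let D be a (v,k,2)-biplane with k ≥ 3, in which any two distinct blocks intersect in exactly two points. Then the graph Γ₂(D) is triangle-free; equivalently, any two adjacent vertices of Γ₂(D) have no common neighbour. -/
variable {v b r k lam : ℕ}

/-- The graph `Γ₂(D)` on the flags of a `(v,k,2)`-biplane: flags `(p,c)` and `(q,d)` are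
adjacent iff `p ≠ q` and `c ∩ d = {p, q}`. -/
def BIBD.Gamma2 (D : BIBD v v k k 2) : SimpleGraph D.Flag where
  Adj x y := x.1.1 ≠ y.1.1 ∧ x.1.2 ∩ y.1.2 = {x.1.1, y.1.1}
  symm := ⟨fun _ _ h => ⟨h.1.symm, by rw [Finset.inter_comm, h.2, Finset.pair_comm]⟩⟩
  loopless := ⟨fun _ h => h.1 rfl⟩

instance (D : BIBD v v k k 2) : DecidableRel D.Gamma2.Adj :=
  fun x y => inferInstanceAs (Decidable (x.1.1 ≠ y.1.1 ∧ x.1.2 ∩ y.1.2 = {x.1.1, y.1.1}))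

theorem SimpleGraph.CliqueFree.neighborFinset_inter_eq_empty {V : Type*} [Fintype V]
    [DecidableEq V] {G : SimpleGraph V} [DecidableRel G.Adj] (hG : G.CliqueFree 3) {x y : V}
    (hxy : G.Adj x y) : G.neighborFinset x ∩ G.neighborFinset y = ∅ :=
  Finset.eq_empty_of_forall_notMem fun z hz => by
    rw [Finset.mem_inter, SimpleGraph.mem_neighborFinset, SimpleGraph.mem_neighborFinset] at hz
    exact hG {x, y, z} (SimpleGraph.is3Clique_triple_iff.mpr ⟨hxy, hz.1, hz.2⟩)

namespace BIBD

theorem Gamma2.mem_of_adj {D : BIBD v v k k 2} {x y : D.Flag} (h : D.Gamma2.Adj x y) :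
    y.1.1 ∈ x.1.2 :=
  (Finset.mem_inter.mp (h.2 ▸ Finset.mem_insert_of_mem (Finset.mem_singleton_self _))).1

/-- The point of a common neighbour of `(p, c)` and `(q, d)` would lie in `c ∩ d = {p, q}`. -/
theorem Gamma2.not_adj_of_adj_of_adj {D : BIBD v v k k 2} {x y z : D.Flag}
    (hxy : D.Gamma2.Adj x y) (hxz : D.Gamma2.Adj x z) : ¬D.Gamma2.Adj y z := by
  intro hyz
  have hz : z.1.1 ∈ x.1.2 ∩ y.1.2 := Finset.mem_inter.mpr ⟨mem_of_adj hxz, mem_of_adj hyz⟩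
  rw [hxy.2, Finset.mem_insert, Finset.mem_singleton] at hz
  exact hz.elim (fun h => hxz.1 h.symm) (fun h => hyz.1 h.symm)

theorem cliqueFree_three_gamma2 (D : BIBD v v k k 2) : D.Gamma2.CliqueFree 3 := fun _ ht => by
  obtain ⟨x, y, z, hxy, hxz, hyz, -⟩ := SimpleGraph.is3Clique_iff.mp ht
  exact Gamma2.not_adj_of_adj_of_adj hxy hxz hyz

end BIBD

theorem gamma2_triangle_free_general (D : BIBD v v k k 2) :
    D.Gamma2.CliqueFree 3 ∧
    ∀ x y : D.Flag, D.Gamma2.Adj x y →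
      D.Gamma2.neighborFinset x ∩ D.Gamma2.neighborFinset y = ∅ :=
  ⟨D.cliqueFree_three_gamma2, fun _ _ => D.cliqueFree_three_gamma2.neighborFinset_inter_eq_empty⟩

/-- The graph `Γ₂(D)` of a `(v,k,2)`-biplane with `k ≥ 3` is triangle-free; equivalently,
any two adjacent vertices have no common neighbour. -/
theorem gamma2_triangle_free (D : BIBD v v k k 2) (hk : 3 ≤ k)
    (hInt : ∀ c ∈ D.blocks, ∀ d ∈ D.blocks, c ≠ d → (c ∩ d).card = 2) :
    D.Gamma2.CliqueFree 3 ∧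
    ∀ x y : D.Flag, D.Gamma2.Adj x y →
      D.Gamma2.neighborFinset x ∩ D.Gamma2.neighborFinset y = ∅ :=
  gamma2_triangle_free_general D
end

section
/- Let D be a (v,k,2)-biplane with k ≥ 3, in which any two distinct blocks intersect in exactly two points. If (p,c) and (q,d) are distinct flags of D with p = q (and c ≠ d), or with c = d (and p ≠ q), then (p,c) and (q,d) are non-adjacent in Γ₂(D) and have no common neighbour in Γ₂(D). -/
variable {v b r k lam : ℕ}

/-! Two flags sharing the point `p` with distinct blocks `c ≠ d` and a common neighbour `(s, e)`
would put the pair `{p, s}` into the three blocks `c`, `d`, `e`; these are distinct because an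
adjacent flag's block meets `c` and `d` in two points, fewer than `k ≥ 3`. This contradicts
`λ = 2`. Two flags `(p, c)`, `(q, c)` with a common neighbour `(s, e)` give
`{p, s} = c ∩ e = {q, s}`, forcing `p = q`. -/

namespace BIBD

variable (D : BIBD v b r k lam)

theorem ne_of_inter_eq_pair (hk : 3 ≤ k) {c e : Finset D.P} (hc : c ∈ D.blocks) {p q : D.P}
    (h : c ∩ e = {p, q}) : c ≠ e := by
  rintro rfl
  have : c.card ≤ 2 := by
    rw [← Finset.inter_self c, h]
    exact Finset.card_le_two
  have := D.block_size c hc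
  omega

theorem card_le_lam_of_forall_mem {S : Finset (Finset D.P)} (hS : S ⊆ D.blocks) {p q : D.P}
    (hpq : p ≠ q) (hmem : ∀ c ∈ S, p ∈ c ∧ q ∈ c) : S.card ≤ lam := by
  calc S.card ≤ (D.blocks.filter fun c => p ∈ c ∧ q ∈ c).card :=
        Finset.card_le_card fun c hc => Finset.mem_filter.2 ⟨hS hc, hmem c hc⟩
    _ = lam := D.pair_deg p q hpq

end BIBD

namespace BIBD.Gamma2

variable {D : BIBD v v k k 2} {x y z : D.Flag}

theorem right_point_mem_inter_of_adj (h : D.Gamma2.Adj x z) : z.1.1 ∈ x.1.2 ∩ z.1.2 := by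
  rw [h.2]
  exact Finset.mem_insert_of_mem (Finset.mem_singleton_self _)

theorem left_point_mem_inter_of_adj (h : D.Gamma2.Adj x z) : x.1.1 ∈ x.1.2 ∩ z.1.2 := by
  rw [h.2]
  exact Finset.mem_insert_self _ _

theorem block_ne_of_adj (hk : 3 ≤ k) (h : D.Gamma2.Adj x z) : x.1.2 ≠ z.1.2 :=
  D.ne_of_inter_eq_pair hk x.2.1 h.2

theorem not_adj_of_block_eq (hk : 3 ≤ k) (hxy : x.1.2 = y.1.2) : ¬ D.Gamma2.Adj x y :=
  fun h => block_ne_of_adj hk h hxy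

theorem not_adj_of_point_eq (hxy : x.1.1 = y.1.1) : ¬ D.Gamma2.Adj x y :=
  fun h => h.1 hxy

theorem not_adj_of_adj_of_point_eq (hk : 3 ≤ k) (hp : x.1.1 = y.1.1) (hc : x.1.2 ≠ y.1.2)
    (hx : D.Gamma2.Adj x z) : ¬ D.Gamma2.Adj y z := by
  intro hy
  have hps : x.1.1 ≠ z.1.1 := hx.1
  have hthree : ({x.1.2, y.1.2, z.1.2} : Finset (Finset D.P)).card = 3 :=
    Finset.card_eq_three.2 ⟨_, _, _, hc, block_ne_of_adj hk hx, block_ne_of_adj hk hy, rfl⟩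
  have hsub : ({x.1.2, y.1.2, z.1.2} : Finset (Finset D.P)) ⊆ D.blocks := by
    simp only [Finset.insert_subset_iff, Finset.singleton_subset_iff]
    exact ⟨x.2.1, y.2.1, z.2.1⟩
  have hmem : ∀ c ∈ ({x.1.2, y.1.2, z.1.2} : Finset (Finset D.P)), x.1.1 ∈ c ∧ z.1.1 ∈ c := by
    have hx₁ := Finset.mem_inter.1 (left_point_mem_inter_of_adj hx)
    have hx₂ := Finset.mem_inter.1 (right_point_mem_inter_of_adj hx)
    have hy₁ := Finset.mem_inter.1 (left_point_mem_inter_of_adj hy)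
    have hy₂ := Finset.mem_inter.1 (right_point_mem_inter_of_adj hy)
    rw [← hp] at hy₁
    simp only [Finset.mem_insert, Finset.mem_singleton]
    rintro c (rfl | rfl | rfl)
    exacts [⟨hx₁.1, hx₂.1⟩, ⟨hy₁.1, hy₂.1⟩, ⟨hx₁.2, hx₂.2⟩]
  have := D.card_le_lam_of_forall_mem hsub hps hmem
  omega

theorem not_adj_of_adj_of_block_eq (hc : x.1.2 = y.1.2) (hp : x.1.1 ≠ y.1.1)
    (hx : D.Gamma2.Adj x z) : ¬ D.Gamma2.Adj y z := by
  intro hy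
  have hpair : ({x.1.1, z.1.1} : Finset D.P) = {y.1.1, z.1.1} := by rw [← hx.2, ← hy.2, hc]
  have : x.1.1 ∈ ({y.1.1, z.1.1} : Finset D.P) := hpair ▸ Finset.mem_insert_self _ _
  rcases Finset.mem_insert.1 this with h | h
  · exact hp h
  · exact hx.1 (Finset.mem_singleton.1 h)

end BIBD.Gamma2

open BIBD.Gamma2 in
theorem gamma2_same_point_or_block_no_common_neighbour_general (D : BIBD v v k k 2) (hk : 3 ≤ k)
    (x y : D.Flag) (hne : x ≠ y) (hshare : x.1.1 = y.1.1 ∨ x.1.2 = y.1.2) :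
    ¬ D.Gamma2.Adj x y ∧
      D.Gamma2.neighborFinset x ∩ D.Gamma2.neighborFinset y = ∅ := by
  have hne' : x.1.1 ≠ y.1.1 ∨ x.1.2 ≠ y.1.2 := by
    by_contra! h
    exact hne (Subtype.ext (Prod.ext h.1 h.2))
  refine ⟨hshare.elim not_adj_of_point_eq (not_adj_of_block_eq hk), ?_⟩
  refine Finset.eq_empty_of_forall_notMem fun z hz => ?_
  simp only [Finset.mem_inter, SimpleGraph.mem_neighborFinset] at hz
  rcases hshare with hp | hc
  · exact not_adj_of_adj_of_point_eq hk hp (hne'.resolve_left (· hp)) hz.1 hz.2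
  · exact not_adj_of_adj_of_block_eq hc (hne'.resolve_right (· hc)) hz.1 hz.2

/-- In the graph `Γ₂(D)` of a `(v,k,2)`-biplane with `k ≥ 3`, two distinct flags sharing
a point, or sharing a block, are non-adjacent and have no common neighbour. -/
theorem gamma2_same_point_or_block_no_common_neighbour (D : BIBD v v k k 2) (hk : 3 ≤ k)
    (hInt : ∀ c ∈ D.blocks, ∀ d ∈ D.blocks, c ≠ d → (c ∩ d).card = 2)
    (x y : D.Flag) (hne : x ≠ y) (hshare : x.1.1 = y.1.1 ∨ x.1.2 = y.1.2) :
    ¬ D.Gamma2.Adj x y ∧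
      D.Gamma2.neighborFinset x ∩ D.Gamma2.neighborFinset y = ∅ :=
  gamma2_same_point_or_block_no_common_neighbour_general D hk x y hne hshare
end

section
/- Let D be a (v,b,r,k,λ)-BIBD and let N be its v × b point-block incidence matrix over ℝ (with N_{p,c} = 1 if p ∈ c and 0 otherwise). Then N·Nᵀ = (r−λ)·I + λ·J, where I is the v × v identity matrix and J the v × v all-ones matrix, and the characteristic polynomial of N·Nᵀ equals (X − r·k)·(X − (r−λ))^{v−1}. -/
variable {v b r k lam : ℕ}

/-- The type of blocks of a BIBD. -/
def BIBD.Block (D : BIBD v b r k lam) : Type := {c : Finset D.P // c ∈ D.blocks}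

instance (D : BIBD v b r k lam) : Fintype D.Block :=
  inferInstanceAs (Fintype {c : Finset D.P // c ∈ D.blocks})

instance (D : BIBD v b r k lam) : DecidableEq D.Block :=
  inferInstanceAs (DecidableEq {c : Finset D.P // c ∈ D.blocks})

/-- The point-block incidence matrix of `D` over `ℝ`. -/
def BIBD.incMatrix (D : BIBD v b r k lam) : Matrix D.P D.Block ℝ :=
  Matrix.of fun p c => if p ∈ c.1 then 1 else 0

section Aux
open Matrix Polynomial
lemma my_vv_mul_vv {n : Type*} [Fintype n] (u w x y : n → ℝ) :
    vecMulVec u w * vecMulVec x y = (w ⬝ᵥ x) • vecMulVec u y := by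
  ext i j
  simp only [Matrix.mul_apply, vecMulVec_apply, Matrix.smul_apply, smul_eq_mul, dotProduct]
  rw [Finset.sum_mul]
  apply Finset.sum_congr rfl
  intros; ring

lemma my_charpoly_conj {n : Type*} [Fintype n] [DecidableEq n]
    (T S M : Matrix n n ℝ) (hTS : T * S = 1) (hST : S * T = 1) :
    (T * M * S).charpoly = M.charpoly := by
  let f : Matrix n n ℝ →+* Matrix n n ℝ[X] := (Polynomial.C : ℝ →+* ℝ[X]).mapMatrix
  have hsc : Matrix.scalar n (X : ℝ[X]) * f T = f T * Matrix.scalar n (X : ℝ[X]) :=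
    Matrix.scalar_commute _ (fun r' => Commute.all _ _) _
  have key : charmatrix (T * M * S) = f T * charmatrix M * f S := by
    unfold charmatrix
    rw [mul_sub, sub_mul]
    congr 1
    · rw [← hsc, mul_assoc, ← _root_.map_mul, hTS, _root_.map_one f, mul_one]
    · rw [_root_.map_mul, _root_.map_mul]
  rw [Matrix.charpoly, key, Matrix.det_mul, Matrix.det_mul]
  have h1 : (f T).det * (f S).det = 1 := by
    rw [← Matrix.det_mul, ← _root_.map_mul, hTS, _root_.map_one f, Matrix.det_one]
  calc (f T).det * (charmatrix M).det * (f S).det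
      = (f T).det * (f S).det * (charmatrix M).det := by ring
    _ = M.charpoly := by rw [h1, one_mul]; rfl

lemma my_charpoly_key (n : ℕ) (hn : 0 < n) (a c : ℝ) :
    (a • (1 : Matrix (Fin n) (Fin n) ℝ) + c • Matrix.of (fun _ _ => (1:ℝ))).charpoly
      = (X - C (a + c * n)) * (X - C a) ^ (n - 1) := by
  haveI : NeZero n := ⟨hn.ne'⟩
  set M : Matrix (Fin n) (Fin n) ℝ :=
    a • (1 : Matrix (Fin n) (Fin n) ℝ) + c • Matrix.of (fun _ _ => (1:ℝ)) with hM
  have hJ : (Matrix.of (fun _ _ => (1:ℝ)) : Matrix (Fin n) (Fin n) ℝ)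
      = vecMulVec (fun _ => 1) (fun _ => 1) := by
    ext i j; simp [vecMulVec_apply]
  set u : Fin n → ℝ := fun j => if j = 0 then 0 else 1 with hu
  set w : Fin n → ℝ := fun i => if i = 0 then 1 else 0 with hw
  set A : Matrix (Fin n) (Fin n) ℝ := vecMulVec u w with hA
  have hA2 : A * A = 0 := by
    rw [hA, my_vv_mul_vv]
    have h0 : w ⬝ᵥ u = 0 := by
      simp only [dotProduct, hu, hw]
      apply Finset.sum_eq_zero; intro x _; by_cases h : x = 0 <;> simp [h]
    rw [h0, zero_smul]
  set T : Matrix (Fin n) (Fin n) ℝ := 1 + A with hT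
  set S : Matrix (Fin n) (Fin n) ℝ := 1 - A with hS
  have hTS : T * S = 1 := by
    rw [hT, hS]
    have h : (1 + A) * (1 - A) = 1 + (A - A) - A * A := by noncomm_ring
    rw [h, sub_self, add_zero, hA2, sub_zero]
  have hST : S * T = 1 := by
    rw [hT, hS]
    have h : (1 - A) * (1 + A) = 1 + (A - A) - A * A := by noncomm_ring
    rw [h, sub_self, add_zero, hA2, sub_zero]
  set z : Fin n → ℝ := fun i => if i = 0 then (n : ℝ) else 1 with hz
  set U : Matrix (Fin n) (Fin n) ℝ := a • 1 + c • vecMulVec w z with hU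
  have hJA : vecMulVec (fun _ => (1:ℝ)) (fun _ => 1) * A
      = ((n:ℝ) - 1) • vecMulVec (fun _ => 1) w := by
    rw [hA, my_vv_mul_vv]
    congr 1
    have h : ∀ x : Fin n, u x = 1 - w x := by
      intro x; simp only [hu, hw]; by_cases h : x = 0 <;> simp [h]
    simp only [dotProduct, one_mul, h]
    rw [Finset.sum_sub_distrib]
    simp [hw, Finset.sum_ite_eq]
  have hAE : A * vecMulVec w z = vecMulVec u z := by
    rw [hA, my_vv_mul_vv]
    have hww : ∀ x : Fin n, w x * w x = w x := by
      intro x; by_cases h : x = 0 <;> simp [hw, h]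
    have h1 : w ⬝ᵥ w = 1 := by
      simp only [dotProduct, hww]
      simp [hw, Finset.sum_ite_eq']
    rw [h1, one_smul]
  have hkey2 : (vecMulVec (fun _ => (1:ℝ)) (fun _ => 1) : Matrix (Fin n) (Fin n) ℝ)
      + ((n:ℝ) - 1) • vecMulVec (fun _ => 1) w = vecMulVec w z + vecMulVec u z := by
    ext i j
    simp only [Matrix.add_apply, Matrix.smul_apply, vecMulVec_apply, hu, hw, hz, smul_eq_mul]
    by_cases hj : j = 0 <;> by_cases hi : i = 0 <;> simp [hj, hi] <;> ring
  have hMTTU : M * T = T * U := by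
    rw [hM, hT, hU, hJ]
    simp only [add_mul, mul_add, smul_mul_assoc, mul_smul_comm, mul_one, one_mul, hJA, hAE]
    linear_combination (norm := module) c • hkey2
  have hconj : M = T * U * S := by
    calc M = M * (T * S) := by rw [hTS, mul_one]
    _ = (M * T) * S := by rw [mul_assoc]
    _ = T * U * S := by rw [hMTTU]
  rw [hconj, my_charpoly_conj T S U hTS hST]
  -- now charpoly of upper triangular U
  have hUt : U.BlockTriangular id := by
    intro i j hij
    have hij' : j < i := hij
    have hi : i ≠ 0 := by
      intro h; rw [h] at hij'; exact absurd hij' (by simp)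
    simp [hU, hw, vecMulVec_apply, Matrix.one_apply_ne (ne_of_gt hij'), hi]
  rw [Matrix.charpoly_of_upperTriangular U hUt]
  have hdiag : ∀ i : Fin n, U i i = if i = 0 then a + c * n else a := by
    intro i
    by_cases h : i = 0 <;>
      simp [hU, hw, hz, Matrix.one_apply, vecMulVec_apply, h] <;> ring
  rw [← Finset.mul_prod_erase Finset.univ _ (Finset.mem_univ (0 : Fin n))]
  rw [hdiag 0, if_pos rfl]
  congr 1
  rw [Finset.prod_congr rfl (fun i hi => by
      rw [hdiag i, if_neg (Finset.ne_of_mem_erase hi)]),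
    Finset.prod_const]
  congr 1
  simp

end Aux

/-- For the incidence matrix `N` of a `(v,b,r,k,λ)`-BIBD, `N·Nᵀ = (r-λ)·I + λ·J`, and the
characteristic polynomial of `N·Nᵀ` is `(X - rk)(X - (r-λ))^(v-1)`. -/
theorem incMatrix_mul_transpose_and_charpoly (D : BIBD v b r k lam) :
    D.incMatrix * D.incMatrix.transpose =
      ((r : ℝ) - (lam : ℝ)) • (1 : Matrix D.P D.P ℝ) +
        (lam : ℝ) • Matrix.of (fun _ _ => (1 : ℝ)) ∧
    (D.incMatrix * D.incMatrix.transpose).charpoly =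
      (Polynomial.X - Polynomial.C ((r : ℝ) * (k : ℝ))) *
        (Polynomial.X - Polynomial.C ((r : ℝ) - (lam : ℝ))) ^ (v - 1) := by
  classical
  have hv : 0 < v := lt_trans (lt_trans Nat.zero_lt_one D.one_lt_k) D.k_lt_v
  have hk1 : 1 ≤ k := le_of_lt D.one_lt_k
  have hv1 : 1 ≤ v := hv
  -- the counting identity r*(k-1) = lam*(v-1)
  have hcount : r * (k - 1) = lam * (v - 1) := by
    have hcard : 0 < Fintype.card D.P := by rw [D.card_points]; exact hv
    obtain ⟨p⟩ := Fintype.card_pos_iff.mp hcard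
    have h1 : ∑ q ∈ Finset.univ.erase p,
        (D.blocks.filter (fun c => p ∈ c ∧ q ∈ c)).card = lam * (v - 1) := by
      rw [Finset.sum_congr rfl (fun q hq =>
        D.pair_deg p q (Ne.symm (Finset.ne_of_mem_erase hq)))]
      rw [Finset.sum_const, smul_eq_mul, Finset.card_erase_of_mem (Finset.mem_univ p),
        Finset.card_univ, D.card_points, mul_comm]
    have h2 : ∑ q ∈ Finset.univ.erase p,
        (D.blocks.filter (fun c => p ∈ c ∧ q ∈ c)).card = r * (k - 1) := by
      have hrw : ∀ q, (D.blocks.filter (fun c => p ∈ c ∧ q ∈ c)).card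
          = ∑ c ∈ D.blocks, if p ∈ c ∧ q ∈ c then 1 else 0 := by
        intro q; rw [Finset.card_filter]
      rw [Finset.sum_congr rfl (fun q _ => hrw q), Finset.sum_comm]
      have hinner : ∀ c ∈ D.blocks, (∑ q ∈ Finset.univ.erase p,
          if p ∈ c ∧ q ∈ c then 1 else 0) = if p ∈ c then k - 1 else 0 := by
        intro c hc
        by_cases hpc : p ∈ c
        · simp only [hpc, true_and, if_pos]
          have hfe : (Finset.univ.erase p).filter (fun q => q ∈ c) = c.erase p := by
            ext q; simp [Finset.mem_erase, and_comm]
          rw [← Finset.card_filter, hfe, Finset.card_erase_of_mem hpc, D.block_size c hc]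
        · simp [hpc]
      rw [Finset.sum_congr rfl hinner, ← Finset.sum_filter,
        Finset.sum_const, smul_eq_mul, D.point_deg p]
    omega
  -- part 1
  have part1 : D.incMatrix * D.incMatrix.transpose =
      ((r : ℝ) - (lam : ℝ)) • (1 : Matrix D.P D.P ℝ) +
        (lam : ℝ) • Matrix.of (fun _ _ => (1 : ℝ)) := by
    ext p q
    rw [Matrix.mul_apply]
    simp only [BIBD.incMatrix, Matrix.transpose_apply, Matrix.of_apply]
    have hterm : ∀ c : D.Block, (if p ∈ c.1 then (1:ℝ) else 0) * (if q ∈ c.1 then 1 else 0)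
        = if p ∈ c.1 ∧ q ∈ c.1 then 1 else 0 := by
      intro c; by_cases h1 : p ∈ c.1 <;> by_cases h2 : q ∈ c.1 <;> simp [h1, h2]
    rw [Finset.sum_congr rfl (fun c _ => hterm c)]
    have hsub : ∑ c : D.Block, (if p ∈ c.1 ∧ q ∈ c.1 then (1:ℝ) else 0)
        = ∑ c ∈ D.blocks, (if p ∈ c ∧ q ∈ c then (1:ℝ) else 0) :=
      (Finset.sum_subtype D.blocks (fun x => Iff.rfl)
        (fun c => if p ∈ c ∧ q ∈ c then (1:ℝ) else 0)).symm
    rw [hsub, Finset.sum_boole]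
    by_cases hpq : p = q
    · subst hpq
      have : D.blocks.filter (fun c => p ∈ c ∧ p ∈ c) = D.blocks.filter (fun c => p ∈ c) := by
        simp
      rw [this, D.point_deg p]
      simp [Matrix.one_apply]
    · rw [D.pair_deg p q hpq]
      simp [Matrix.one_apply_ne hpq]
  refine ⟨part1, ?_⟩
  rw [part1]
  -- transport to Fin v
  let e : D.P ≃ Fin v := Fintype.equivFinOfCardEq D.card_points
  have hre : ((r : ℝ) - (lam : ℝ)) • (1 : Matrix D.P D.P ℝ) +
        (lam : ℝ) • Matrix.of (fun _ _ => (1 : ℝ))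
      = Matrix.reindex e.symm e.symm (((r : ℝ) - (lam : ℝ)) • (1 : Matrix (Fin v) (Fin v) ℝ) +
        (lam : ℝ) • Matrix.of (fun _ _ => (1 : ℝ))) := by
    ext i j
    simp [Matrix.reindex_apply, Matrix.submatrix_apply, Matrix.one_apply,
      EmbeddingLike.apply_eq_iff_eq]
  rw [hre, Matrix.charpoly_reindex, my_charpoly_key v hv ((r:ℝ) - lam) (lam:ℝ)]
  have harg : (r:ℝ) - (lam:ℝ) + (lam:ℝ) * (v:ℝ) = (r:ℝ) * (k:ℝ) := by
    have hc : (r:ℝ) * ((k:ℝ) - 1) = (lam:ℝ) * ((v:ℝ) - 1) := by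
      have := congrArg (Nat.cast : ℕ → ℝ) hcount
      push_cast [Nat.cast_sub hk1, Nat.cast_sub hv1] at this
      linarith [this]
    linarith [hc]
  rw [harg]
end

section
/- Let D be a (v,b,r,k,λ)-BIBD with v ≤ b (which holds by Fisher's inequality), and let A be the adjacency matrix over ℝ of the incidence graph Γ_D of D. Then the characteristic polynomial of A equals X^{b−v} · (X² − r·k) · (X² − (r−λ))^{v−1}. -/
variable {v b r k lam : ℕ}

/-- The incidence graph of `D`: the bipartite graph on points and blocks, with a point
adjacent to a block iff it lies in the block. -/
def BIBD.incGraph (D : BIBD v b r k lam) : SimpleGraph (D.P ⊕ D.Block) where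
  Adj x y := match x, y with
    | Sum.inl p, Sum.inr c => p ∈ c.1
    | Sum.inr c, Sum.inl p => p ∈ c.1
    | _, _ => False
  symm := ⟨by rintro (p | c) (q | d) h <;> exact h⟩
  loopless := ⟨by rintro (p | c) h <;> exact h⟩

instance (D : BIBD v b r k lam) : DecidableRel D.incGraph.Adj := fun x y =>
  match x, y with
  | Sum.inl p, Sum.inr c => inferInstanceAs (Decidable (p ∈ c.1))
  | Sum.inr c, Sum.inl p => inferInstanceAs (Decidable (p ∈ c.1))
  | Sum.inl _, Sum.inl _ => Decidable.isFalse fun h => h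
  | Sum.inr _, Sum.inr _ => Decidable.isFalse fun h => h

/-!
With `N` the `v × b` incidence matrix, the adjacency matrix of the incidence graph is
`[[0, N], [Nᵀ, 0]]`, and for such a bipartite block matrix `X^v χ_A(X) = X^b χ_{N Nᵀ}(X²)`.
The design axioms say `N Nᵀ = (r - λ) I + λ J`, whose characteristic polynomial is
`(X - (r - λ))^(v-1) (X - (r - λ + λv))`; applying `N Nᵀ` to the all-ones vector, where `Nᵀ`
acts as `k` and `N` as `r`, shows `r - λ + λv = rk`.
-/

namespace Matrix

open Polynomial

variable {m n R : Type*} [Fintype m] [Fintype n] [DecidableEq m] [DecidableEq n] [CommRing R]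

theorem charpoly_comp (M : Matrix n n R) (p : R[X]) :
    M.charpoly.comp p = (scalar n p - M.map C).det := by
  rw [charpoly, ← coe_compRingHom_apply, RingHom.map_det]
  congr 1
  ext i j
  by_cases h : i = j <;> simp [h]

theorem charpoly_fromBlocks_zero₁₁_zero₂₂' (A : Matrix m n R) (B : Matrix n m R) :
    X ^ Fintype.card m * (fromBlocks 0 A B 0).charpoly =
      X ^ Fintype.card n * (A * B).charpoly.comp (X ^ 2) := by
  have hprod : charmatrix (fromBlocks 0 A B 0) * fromBlocks (scalar m X) 0 (B.map C) 1 =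
      fromBlocks (scalar m (X ^ 2) - (A * B).map C) (-A.map C) 0 (scalar n X) := by
    simp [charmatrix_fromBlocks, fromBlocks_multiply, sq, Matrix.map_mul, sub_eq_add_neg,
      ← smul_eq_diagonal_mul, ← smul_eq_mul_diagonal, ← diagonal_smul]
  have hdet := congrArg det hprod
  simp only [det_mul, det_fromBlocks_zero₁₂, det_fromBlocks_zero₂₁, det_one, mul_one, scalar_apply,
    det_diagonal, Finset.prod_const, Finset.card_univ] at hdet
  rw [charpoly_comp, charpoly, scalar_apply, mul_comm, hdet, mul_comm]

theorem charpoly_fromBlocks_zero₁₁_zero₂₂ (A : Matrix m n R) (B : Matrix n m R)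
    (hle : Fintype.card m ≤ Fintype.card n) :
    (fromBlocks 0 A B 0).charpoly =
      X ^ (Fintype.card n - Fintype.card m) * (A * B).charpoly.comp (X ^ 2) := by
  rw [← (isRegular_X_pow (Fintype.card m)).left.eq_iff, charpoly_fromBlocks_zero₁₁_zero₂₂',
    ← mul_assoc, ← pow_add, Nat.add_sub_cancel' hle]

theorem charpoly_vecMulVec_add_scalar [Nonempty n] (u w : n → R) (μ : R) :
    (vecMulVec u w + scalar n μ).charpoly =
      (X - C μ) ^ (Fintype.card n - 1) * (X - C μ - C (u ⬝ᵥ w)) := by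
  rw [← sub_neg_eq_add, ← map_neg, charpoly_sub_scalar, charpoly_vecMulVec]
  have h : 1 ≤ Fintype.card n := Fintype.card_pos
  conv_lhs => rw [← Nat.sub_add_cancel h]
  simp only [pow_succ, add_tsub_cancel_right, smul_eq_C_mul, map_neg, sub_comp, mul_comp, pow_comp,
    X_comp, C_comp]
  ring

end Matrix

open Matrix Polynomial Finset

namespace BIBD

variable (R : Type*) [CommRing R] (D : BIBD v b r k lam)

theorem card_block : Fintype.card D.Block = b :=
  (Fintype.card_coe D.blocks).trans D.card_blocks

instance : Nonempty D.P :=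
  Fintype.card_pos_iff.mp <| by
    rw [D.card_points]
    exact (Nat.zero_lt_one.trans D.one_lt_k).trans D.k_lt_v

def incMatrix_s15 : Matrix D.P D.Block R := of fun p c => if p ∈ c.1 then 1 else 0

theorem incGraph_adjMatrix_eq_fromBlocks :
    D.incGraph.adjMatrix R = fromBlocks 0 (D.incMatrix_s15 R) (D.incMatrix_s15 R)ᵀ 0 := by
  ext (p | c) (q | d) <;> rfl

theorem incMatrix_mul_transpose_apply (p q : D.P) :
    (D.incMatrix_s15 R * (D.incMatrix_s15 R)ᵀ) p q = (#{c ∈ D.blocks | p ∈ c ∧ q ∈ c} : R) := by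
  simp only [incMatrix_s15, mul_apply, transpose_apply, of_apply, ite_zero_mul_ite_zero, mul_one]
  rw [← sum_boole]
  exact sum_coe_sort D.blocks fun c => if p ∈ c ∧ q ∈ c then (1 : R) else 0

theorem incMatrix_mul_transpose :
    D.incMatrix_s15 R * (D.incMatrix_s15 R)ᵀ =
      vecMulVec (fun _ => (lam : R)) 1 + scalar D.P ((r : R) - lam) := by
  ext p q
  rw [incMatrix_mul_transpose_apply]
  by_cases hpq : p = q
  · subst hpq
    simp [D.point_deg]
  · simp [D.pair_deg p q hpq, hpq]

theorem incMatrix_mulVec_one : D.incMatrix_s15 R *ᵥ 1 = fun _ => (r : R) := by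
  ext p
  simp only [incMatrix_s15, mulVec, dotProduct, of_apply, Pi.one_apply, mul_one]
  calc ∑ c : D.Block, (if p ∈ c.1 then (1 : R) else 0)
      = ∑ c ∈ D.blocks, if p ∈ c then 1 else 0 :=
        sum_coe_sort D.blocks fun c => if p ∈ c then (1 : R) else 0
    _ = r := by rw [sum_boole, D.point_deg p]

theorem incMatrix_transpose_mulVec_one : (D.incMatrix_s15 R)ᵀ *ᵥ 1 = fun _ => (k : R) := by
  ext c
  simp [incMatrix_s15, mulVec, dotProduct, D.block_size c.1 c.2]

theorem r_sub_lam_add_lam_mul_card_eq : ((r : R) - lam) + lam * Fintype.card D.P = r * k := by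
  obtain ⟨p⟩ : Nonempty D.P := inferInstance
  have h := congrFun (mulVec_mulVec 1 (D.incMatrix_s15 R) (D.incMatrix_s15 R)ᵀ) p
  rw [incMatrix_transpose_mulVec_one, incMatrix_mul_transpose] at h
  have hrow := congrFun (D.incMatrix_mulVec_one R) p
  simp only [mulVec, dotProduct, ← sum_mul, vecMulVec, Pi.one_apply, mul_one, scalar_apply,
    Matrix.add_apply, of_apply, diagonal_apply] at h hrow
  simp only [hrow, sum_add_distrib, sum_const, card_univ, nsmul_eq_mul, sum_ite_eq,
    mem_univ, ↓reduceIte] at h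
  linear_combination -h

end BIBD

/-- The characteristic polynomial of the adjacency matrix of the incidence graph of a
`(v,b,r,k,λ)`-BIBD with `v ≤ b` is `X^(b-v)·(X² - rk)·(X² - (r-λ))^(v-1)`. -/
theorem incGraph_adjMatrix_charpoly (D : BIBD v b r k lam) (hvb : v ≤ b) :
    (D.incGraph.adjMatrix ℝ).charpoly =
      Polynomial.X ^ (b - v) *
        (Polynomial.X ^ 2 - Polynomial.C ((r : ℝ) * (k : ℝ))) *
        (Polynomial.X ^ 2 - Polynomial.C ((r : ℝ) - (lam : ℝ))) ^ (v - 1) := by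
  have hcard : Fintype.card D.P ≤ Fintype.card D.Block := by
    rwa [D.card_points, D.card_block]
  rw [D.incGraph_adjMatrix_eq_fromBlocks ℝ, charpoly_fromBlocks_zero₁₁_zero₂₂ _ _ hcard,
    D.incMatrix_mul_transpose ℝ, charpoly_vecMulVec_add_scalar,
    ← D.r_sub_lam_add_lam_mul_card_eq ℝ]
  simp only [D.card_block, D.card_points, map_sub, map_natCast, dotProduct_one, sum_const, card_univ,
    nsmul_eq_mul, map_mul, mul_comp, pow_comp, sub_comp, X_comp, natCast_comp, map_add]
  ring
end
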